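/- Let ν be a valuation on K[x] extending ν_0, let n ∈ ℕ be such that Ψ_n ≠ ∅ and {ν(Q) : Q ∈ Ψ_n} has no maximal element, and let Q_n be a limit key polynomial for Ψ_n. Then 𝔳 = {ν_Q}_{Q∈Ψ_n} is a totally ordered subset of V with no maximal element, Q_n is a polynomial of least degree that is not 𝔳-stable, and taking γ = ν(Q_n), for every f ∈ K[x] with Q_n-expansion f = f_0 + f_1 Q_n + … + f_r Q_n^r one has ν_{Q_n}(f) = min_{0≤j≤r} {𝔳(f_j) + jγ}. -/

import Mathlib

/-!
For `Q ∈ Ψ n` let `a` be a root of `Q` in `K̄` with `ν̄ (x - a) = δ Q =: d`. Since `Q` is a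
key polynomial, every root `b` of a polynomial of degree `< n` has `ν̄ (x - b) < d`; from this
the truncation `ν_Q` turns out to be the restriction to `K[x]` of the Gauss valuation of `K̄[x]`
centred at `a` with radius `d`, that is of `h ↦ ν̄ (lc h) + ∑_{h b = 0} min (ν̄ (x - b)) d`.
All comparisons between the `ν_Q` thus become comparisons of these capped sums in `d`: a larger
level gives a larger truncation, `ν Q < ν Q'` forces `δ Q < δ Q'`, and a polynomial with
`ν_{Q'} f < ν f` has a root beyond `δ Q'`, so its truncations strictly increase along `Ψ n`.
Polynomials of degree `< deg Q_n` lie outside `K_n`, hence stabilise at their value `ν f`, and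
`ν_{Q_n}` of a `Q_n`-expansion is the least value of its terms.
-/

open Polynomial

/-- An additive valuation (possibly with nontrivial support) on a commutative
ring `R`, with values in `Γ ∪ {∞}`. -/
structure ValOn (R : Type*) [CommRing R] (Γ : Type*) [AddCommGroup Γ] [LinearOrder Γ] [IsOrderedAddMonoid Γ] where
  v : R → WithTop Γ
  v_zero : v 0 = ⊤
  v_one : v 1 = 0
  v_mul : ∀ a b, v (a * b) = v a + v b
  min_le_v_add : ∀ a b, min (v a) (v b) ≤ v (a + b)

namespace ValOn

variable {R : Type*} [CommRing R] {Γ : Type*} [AddCommGroup Γ] [LinearOrder Γ] [IsOrderedAddMonoid Γ]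

theorem v_neg (w : ValOn R Γ) (a : R) : w.v (-a) = w.v a := by
  have h1 : w.v (-1) + w.v (-1) = 0 := by
    rw [← w.v_mul]; norm_num [w.v_one]
  have h2 : w.v (-1) = 0 := by
    cases hx : w.v (-1) with
    | top => rw [hx] at h1; simp at h1
    | coe x =>
        rw [hx, ← WithTop.coe_add, ← WithTop.coe_zero, WithTop.coe_inj] at h1
        have hx0 : x = 0 := by
          rcases lt_trichotomy x 0 with hc | hc | hc
          · exact absurd h1 (ne_of_lt (add_neg hc hc))
          · exact hc
          · exact absurd h1 (ne_of_gt (add_pos hc hc))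
        rw [hx0, WithTop.coe_zero]
  calc w.v (-a) = w.v (-1 * a) := by rw [neg_one_mul]
  _ = w.v a := by rw [w.v_mul, h2, zero_add]

theorem le_v_sum (w : ValOn R Γ) {α : Type*} {γ : WithTop Γ} (s : Finset α) (h : α → R)
    (H : ∀ t ∈ s, γ ≤ w.v (h t)) : γ ≤ w.v (∑ t ∈ s, h t) := by
  classical
  induction s using Finset.induction_on with
  | empty => simp [w.v_zero]
  | insert _ _ hx ih =>
      rw [Finset.sum_insert hx]
      refine le_trans ?_ (w.min_le_v_add _ _)
      rw [le_min_iff]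
      exact ⟨H _ (Finset.mem_insert_self _ _),
        ih fun t ht => H t (Finset.mem_insert_of_mem ht)⟩

theorem lt_v_sum (w : ValOn R Γ) {α : Type*} {γ : WithTop Γ} (hγ : γ ≠ ⊤) (s : Finset α)
    (h : α → R) (H : ∀ t ∈ s, γ < w.v (h t)) : γ < w.v (∑ t ∈ s, h t) := by
  classical
  induction s using Finset.induction_on with
  | empty => simp [w.v_zero]; exact lt_top_iff_ne_top.mpr hγ
  | insert _ _ hx ih =>
      rw [Finset.sum_insert hx]
      refine lt_of_lt_of_le ?_ (w.min_le_v_add _ _)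
      rw [lt_min_iff]
      exact ⟨H _ (Finset.mem_insert_self _ _),
        ih fun t ht => H t (Finset.mem_insert_of_mem ht)⟩

/-- The subring `⊕_{γ ∈ Γ} P_γ` of the monoid algebra `R[Γ]`, where
`P_γ = {f : γ ≤ v f}`.  The graded ring `G_v = ⊕_γ P_γ/P_γ⁺` is realized below as the
quotient of this subring by the ideal `⊕_γ P_γ⁺`. -/
def gradedCarrier (w : ValOn R Γ) : Subring (AddMonoidAlgebra R Γ) where
  carrier := {s | ∀ γ : Γ, (γ : WithTop Γ) ≤ w.v (s.coeff γ)}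
  zero_mem' := by intro γ; simp [w.v_zero]
  one_mem' := by
    intro γ
    classical
    show (γ : WithTop Γ) ≤ w.v ((AddMonoidAlgebra.single (0:Γ) (1:R)).coeff γ)
    rw [AddMonoidAlgebra.coeff_single, Finsupp.single_apply]
    split_ifs with h
    · subst h; simp [w.v_one]
    · simp [w.v_zero]
  add_mem' := by
    intro a b ha hb γ
    refine le_trans ?_ (w.min_le_v_add _ _)
    exact le_min (ha γ) (hb γ)
  neg_mem' := by
    intro a ha γ
    show (γ : WithTop Γ) ≤ w.v ((-a).coeff γ)
    rw [AddMonoidAlgebra.coeff_neg, Finsupp.neg_apply, w.v_neg]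
    exact ha γ
  mul_mem' := by
    classical
    intro a b ha hb γ
    rw [AddMonoidAlgebra.coeff_mul]
    rw [Finsupp.sum]
    refine w.le_v_sum _ _ (fun α hα => ?_)
    rw [Finsupp.sum]
    refine w.le_v_sum _ _ (fun β hβ => ?_)
    split_ifs with h
    · subst h
      rw [w.v_mul, WithTop.coe_add]
      exact add_le_add (ha α) (hb β)
    · simp [w.v_zero]

/-- The ideal `⊕_{γ ∈ Γ} P_γ⁺` of `gradedCarrier w`. -/
def gradedIdeal (w : ValOn R Γ) : Ideal (gradedCarrier w) where
  carrier := {s | ∀ γ : Γ, (γ : WithTop Γ) < w.v ((s : AddMonoidAlgebra R Γ).coeff γ)}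
  zero_mem' := by intro γ; simp [w.v_zero]
  add_mem' := by
    intro a b ha hb γ
    refine lt_of_lt_of_le ?_ (w.min_le_v_add _ _)
    exact lt_min (ha γ) (hb γ)
  smul_mem' := by
    classical
    intro c x hx γ
    rw [smul_eq_mul]
    show (γ : WithTop Γ) < w.v (((c : AddMonoidAlgebra R Γ) * (x : AddMonoidAlgebra R Γ)).coeff γ)
    rw [AddMonoidAlgebra.coeff_mul, Finsupp.sum]
    refine w.lt_v_sum (WithTop.coe_ne_top) _ _ (fun α hα => ?_)
    rw [Finsupp.sum]
    refine w.lt_v_sum (WithTop.coe_ne_top) _ _ (fun β hβ => ?_)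
    split_ifs with h
    · subst h
      rw [w.v_mul, WithTop.coe_add]
      exact WithTop.add_lt_add_of_le_of_lt WithTop.coe_ne_top (c.2 α) (hx β)
    · simp [w.v_zero]
end ValOn

/-- The graded ring `G_w = ⊕_{γ} P_γ/P_γ⁺` associated to the valuation `w`,
realized as a quotient. -/
abbrev Graded {R : Type*} [CommRing R] {Γ : Type*} [AddCommGroup Γ] [LinearOrder Γ] [IsOrderedAddMonoid Γ]
    (w : ValOn R Γ) : Type _ :=
  (ValOn.gradedCarrier w) ⧸ (ValOn.gradedIdeal w)

namespace ValOn

variable {R : Type*} [CommRing R] {Γ : Type*} [AddCommGroup Γ] [LinearOrder Γ] [IsOrderedAddMonoid Γ]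

/-- `inv_w f`, the initial form (image of `f` in the homogeneous component
`P_{v f}/P_{v f}⁺` of the graded ring), with `inv_w f = 0` when `f ∈ supp w`. -/
noncomputable def initialForm (w : ValOn R Γ) (f : R) : Graded w :=
  if h : w.v f = ⊤ then 0
  else Ideal.Quotient.mk (gradedIdeal w)
    ⟨AddMonoidAlgebra.single ((w.v f).untop h) f, by
      intro γ
      classical
      show (γ : WithTop Γ) ≤ w.v ((AddMonoidAlgebra.single ((w.v f).untop h) f).coeff γ)
      rw [AddMonoidAlgebra.coeff_single, Finsupp.single_apply]
      split_ifs with hh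
      · rw [← hh, WithTop.coe_untop]
      · simp [w.v_zero]⟩

theorem gradedCarrier_mono {w₁ w₂ : ValOn R Γ} (h : ∀ f, w₁.v f ≤ w₂.v f) :
    gradedCarrier w₁ ≤ gradedCarrier w₂ :=
  fun s hs γ => (hs γ).trans (h _)

/-- The homomorphism `φ : G_{w₁} → G_{w₂}` of graded rings, for `w₁ ≤ w₂`:
it sends `inv_{w₁} f` to `inv_{w₂} f` if `w₁ f = w₂ f` and to `0` if `w₁ f < w₂ f`. -/
noncomputable def phi (w₁ w₂ : ValOn R Γ) (h : ∀ f, w₁.v f ≤ w₂.v f) :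
    Graded w₁ →+* Graded w₂ :=
  Ideal.Quotient.lift (gradedIdeal w₁)
    ((Ideal.Quotient.mk (gradedIdeal w₂)).comp (Subring.inclusion (gradedCarrier_mono h)))
    (by
      intro a ha
      rw [RingHom.comp_apply, Ideal.Quotient.eq_zero_iff_mem]
      exact fun γ => lt_of_lt_of_le (ha γ) (h _))

end ValOn


open ValOn

section PolyDefs

variable {K : Type*} [Field K] {Γ : Type*} [AddCommGroup Γ] [LinearOrder Γ] [IsOrderedAddMonoid Γ]

/-- A polynomial `f` is `𝔳`-stable for a family `𝔳 = (ν_i)_{i ∈ I}` if the values `ν_i(f)`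
eventually stabilize. -/
def Stable {I : Type*} [Preorder I] (ν : I → ValOn (Polynomial K) Γ) (f : Polynomial K) : Prop :=
  ∃ i : I, ∀ j : I, i ≤ j → (ν j).v f = (ν i).v f

/-- The truncation `w_q` of `w` at `q`:
`w_q(f) = min_j w(f_j q^j)` where `f = ∑ f_j q^j` is the `q`-expansion of `f`
(for monic non-constant `q`, the `j`-th coefficient of the `q`-expansion is
`(f /ₘ q^j) %ₘ q`, and all the nonzero coefficients occur for `j ≤ natDegree f`). -/
noncomputable def truncVal (w : ValOn (Polynomial K) Γ) (q f : Polynomial K) : WithTop Γ :=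
  (Finset.range (f.natDegree + 1)).inf' Finset.nonempty_range_add_one
    (fun j => w.v (((f /ₘ q ^ j) %ₘ q) * q ^ j))

/-- `δ(f) = max {ν̄(x - a) : a a root of f}` for a polynomial over an algebraically closed
field, with the convention `δ(f) = ⊥ = -∞` when `f` has no roots (e.g. `deg f = 0`). -/
noncomputable def deltaOf {F : Type*} [Field F] (wbar : ValOn (Polynomial F) Γ)
    (f : Polynomial F) : WithBot (WithTop Γ) :=
  (f.roots.map (fun a => ((wbar.v (X - C a) : WithTop Γ) : WithBot (WithTop Γ)))).sup

/-- `δ(f)` of `f ∈ K[x]`, computed via the fixed extension `ν̄` of `ν` to `K̄[x]`. -/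
noncomputable def delta (wbar : ValOn (Polynomial (AlgebraicClosure K)) Γ)
    (f : Polynomial K) : WithBot (WithTop Γ) :=
  deltaOf wbar (f.map (algebraMap K (AlgebraicClosure K)))

/-- `Q` is a key polynomial (of level `δ(Q)`) for the valuation `ν` (with fixed extension
`ν̄` to `K̄[x]`): `Q` is monic and `δ(f) ≥ δ(Q) → deg f ≥ deg Q` for every nonzero `f`. -/
def IsKeyPoly (wbar : ValOn (Polynomial (AlgebraicClosure K)) Γ) (Q : Polynomial K) : Prop :=
  Q.Monic ∧ ∀ f : Polynomial K, f ≠ 0 → delta wbar Q ≤ delta wbar f → Q.degree ≤ f.degree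

/-- `Ψ_n`: the set of key polynomials of degree `n`. -/
def Psi (wbar : ValOn (Polynomial (AlgebraicClosure K)) Γ) (n : ℕ) : Set (Polynomial K) :=
  {Q | IsKeyPoly wbar Q ∧ Q.natDegree = n}

/-- The set `K_n = {f : ν_Q(f) < ν(f) for all Q ∈ Ψ_n}`. -/
def LimitSet (w : ValOn (Polynomial K) Γ) (wbar : ValOn (Polynomial (AlgebraicClosure K)) Γ)
    (n : ℕ) : Set (Polynomial K) :=
  {f | ∀ Q ∈ Psi wbar n, truncVal w Q f < w.v f}

/-- A limit key polynomial for `Ψ_n`: a monic polynomial in `K_n` of least degree. -/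
def IsLimitKeyPoly (w : ValOn (Polynomial K) Γ)
    (wbar : ValOn (Polynomial (AlgebraicClosure K)) Γ) (n : ℕ) (Qn : Polynomial K) : Prop :=
  Qn.Monic ∧ Qn ∈ LimitSet w wbar n ∧ ∀ g ∈ LimitSet w wbar n, Qn.degree ≤ g.degree

/-- `g` is `𝔳`-stable for the family `𝔳 = (ν_Q)_{Q ∈ Ψ_n}`, ordered by `Q ⪯ Q' ↔ ν_Q ≤ ν_{Q'}`. -/
def PsiStable (w : ValOn (Polynomial K) Γ) (wbar : ValOn (Polynomial (AlgebraicClosure K)) Γ)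
    (n : ℕ) (g : Polynomial K) : Prop :=
  ∃ Q ∈ Psi wbar n, ∀ Q' ∈ Psi wbar n,
    (∀ h : Polynomial K, truncVal w Q h ≤ truncVal w Q' h) → truncVal w Q' g = truncVal w Q g

/-- `v` is a Krull valuation: its support is trivial. -/
def IsKrullVal (v : Polynomial K → WithTop Γ) : Prop :=
  ∀ f : Polynomial K, f ≠ 0 → v f ≠ ⊤

/-- The quotient group `v(K[x])/ν₀K` is a torsion group: every value of `v` has a positive
multiple lying in the value group of `ν₀`. -/
def TorsionOverBase (ν₀ : ValOn K Γ) (v : Polynomial K → WithTop Γ) : Prop :=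
  ∀ f : Polynomial K, f ≠ 0 → ∃ m : ℕ, 0 < m ∧ ∃ a : K, a ≠ 0 ∧ m • v f = ν₀.v a

/-- `v` (a valuation on `K[x]` extending `ν₀`) is residue-transcendental: it is Krull and the
residue field extension `K(x)v ∣ Kν₀` is transcendental, i.e. there are `f, g` with
`v f = v g` whose residue `res(f/g)` is transcendental over `Kν₀`: every polynomial over
`Kν₀` (with coefficients `res(c_i)`, not all zero) does not vanish at `res(f/g)`. -/
def ResidueTranscendental (ν₀ : ValOn K Γ) (v : Polynomial K → WithTop Γ) : Prop :=
  IsKrullVal v ∧ ∃ f g : Polynomial K, f ≠ 0 ∧ g ≠ 0 ∧ v f = v g ∧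
    ∀ (n : ℕ) (c : ℕ → K), (∀ i, 0 ≤ ν₀.v (c i)) → (∃ i, i ≤ n ∧ ν₀.v (c i) = 0) →
      v (∑ i ∈ Finset.range (n + 1), Polynomial.C (c i) * f ^ i * g ^ (n - i)) = v (g ^ n)

/-- `v` is value-transcendental: it is not Krull, or `v(K[x])/ν₀K` is not torsion. -/
def ValueTranscendental (ν₀ : ValOn K Γ) (v : Polynomial K → WithTop Γ) : Prop :=
  ¬ IsKrullVal v ∨ ¬ TorsionOverBase ν₀ v

/-- `v` is valuation-transcendental. -/
def ValuationTranscendental (ν₀ : ValOn K Γ) (v : Polynomial K → WithTop Γ) : Prop :=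
  ValueTranscendental ν₀ v ∨ ResidueTranscendental ν₀ v

/-- `v` is valuation-algebraic. -/
def ValuationAlgebraic (ν₀ : ValOn K Γ) (v : Polynomial K → WithTop Γ) : Prop :=
  ¬ ValuationTranscendental ν₀ v

end PolyDefs

namespace ValOn

variable {Γ : Type*} [AddCommGroup Γ] [LinearOrder Γ] [IsOrderedAddMonoid Γ]

section Basic

variable {R S : Type*} [CommRing R] [CommRing S] (w : ValOn R Γ)

theorem min_le_v_sub (a b : R) : min (w.v a) (w.v b) ≤ w.v (a - b) := by
  simpa [sub_eq_add_neg, w.v_neg] using w.min_le_v_add a (-b)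

theorem v_add_eq_of_lt {a b : R} (h : w.v a < w.v b) : w.v (a + b) = w.v a := by
  refine le_antisymm ?_ (by simpa [min_eq_left h.le] using w.min_le_v_add a b)
  have key : min (w.v (a + b)) (w.v b) ≤ w.v a := by simpa using w.min_le_v_sub (a + b) b
  rcases min_choice (w.v (a + b)) (w.v b) with hm | hm
  · rwa [hm] at key
  · rw [hm] at key; exact absurd key (not_le.2 h)

theorem v_sub_eq_of_lt {a b : R} (h : w.v a < w.v b) : w.v (a - b) = w.v a := by
  rw [sub_eq_add_neg]
  exact w.v_add_eq_of_lt (by rwa [w.v_neg])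

theorem min_v_sub_eq (a b : R) : min (w.v (a - b)) (w.v b) = min (w.v a) (w.v b) :=
  le_antisymm
    (le_min (by simpa using w.min_le_v_add (a - b) b) (min_le_right _ _))
    (le_min (w.min_le_v_sub a b) (min_le_right _ _))

theorem v_pow (a : R) (j : ℕ) : w.v (a ^ j) = j • w.v a := by
  induction j with
  | zero => simpa using w.v_one
  | succ j ih => rw [pow_succ, w.v_mul, ih, succ_nsmul]

theorem v_multiset_prod (s : Multiset R) : w.v s.prod = (s.map w.v).sum := by
  induction s using Multiset.induction_on with
  | empty => simpa using w.v_one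
  | cons a s ih => simp [w.v_mul, ih]

theorem le_v_sum_add {α : Type*} (s : Finset α) (f : α → R) {γ c : WithTop Γ}
    (H : ∀ t ∈ s, γ ≤ w.v (f t) + c) : γ ≤ w.v (∑ t ∈ s, f t) + c := by
  classical
  induction s using Finset.induction_on with
  | empty => simp [w.v_zero]
  | insert t s ht ih =>
    rw [Finset.sum_insert ht]
    refine le_trans ?_ (add_le_add_left (w.min_le_v_add _ _) c)
    rw [← min_add_add_right]
    exact le_min (H t (Finset.mem_insert_self t s))
      (ih fun t' ht' => H t' (Finset.mem_insert_of_mem ht'))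

def comap (φ : R →+* S) (w : ValOn S Γ) : ValOn R Γ where
  v a := w.v (φ a)
  v_zero := by simpa using w.v_zero
  v_one := by simpa using w.v_one
  v_mul a b := by simpa using w.v_mul (φ a) (φ b)
  min_le_v_add a b := by simpa using w.min_le_v_add (φ a) (φ b)

@[simp]
theorem comap_v (φ : R →+* S) (w : ValOn S Γ) (a : R) : (w.comap φ).v a = w.v (φ a) := rfl

end Basic

section Gauss

variable {R : Type*} [CommRing R] (u : ValOn R Γ) (d : Γ)

noncomputable def gaussV (h : R[X]) : WithTop Γ :=
  h.support.inf fun j => u.v (h.coeff j) + ((j • d : Γ) : WithTop Γ)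

variable {u d}

theorem le_gaussV_iff {γ : WithTop Γ} {h : R[X]} :
    γ ≤ gaussV u d h ↔ ∀ j, γ ≤ u.v (h.coeff j) + ((j • d : Γ) : WithTop Γ) := by
  refine Finset.le_inf_iff.trans ⟨fun H j => ?_, fun H j _ => H j⟩
  by_cases hj : j ∈ h.support
  · exact H j hj
  · simp [Polynomial.notMem_support_iff.1 hj, u.v_zero]

theorem gaussV_le (h : R[X]) (j : ℕ) :
    gaussV u d h ≤ u.v (h.coeff j) + ((j • d : Γ) : WithTop Γ) :=
  le_gaussV_iff.1 le_rfl j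

theorem exists_least_index_gaussV_eq (h : R[X]) :
    ∃ j, u.v (h.coeff j) + ((j • d : Γ) : WithTop Γ) = gaussV u d h ∧
      ∀ i < j, gaussV u d h < u.v (h.coeff i) + ((i • d : Γ) : WithTop Γ) := by
  classical
  have hex : ∃ j, u.v (h.coeff j) + ((j • d : Γ) : WithTop Γ) = gaussV u d h := by
    rcases h.support.eq_empty_or_nonempty with hs | hs
    · refine ⟨0, ?_⟩
      simp [gaussV, Polynomial.support_eq_empty.1 hs, u.v_zero]
    · obtain ⟨j, -, hj⟩ := Finset.exists_mem_eq_inf' hs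
        (fun j => u.v (h.coeff j) + ((j • d : Γ) : WithTop Γ))
      exact ⟨j, by rw [gaussV, ← Finset.inf'_eq_inf hs, hj]⟩
  exact ⟨Nat.find hex, Nat.find_spec hex,
    fun i hi => lt_of_le_of_ne (gaussV_le h i) (Ne.symm (Nat.find_min hex hi))⟩

theorem gaussV_terms_add (h₁ h₂ : R[X]) (i j : ℕ) :
    (u.v (h₁.coeff i) + ((i • d : Γ) : WithTop Γ)) + (u.v (h₂.coeff j) + ((j • d : Γ) : WithTop Γ))
      = u.v (h₁.coeff i * h₂.coeff j) + (((i + j) • d : Γ) : WithTop Γ) := by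
  rw [u.v_mul, add_nsmul, WithTop.coe_add, add_add_add_comm]

theorem gaussV_add_le_gaussV_mul (h₁ h₂ : R[X]) :
    gaussV u d h₁ + gaussV u d h₂ ≤ gaussV u d (h₁ * h₂) := by
  refine le_gaussV_iff.2 fun k => ?_
  rw [Polynomial.coeff_mul]
  refine u.le_v_sum_add _ _ fun x hx => ?_
  rw [← Finset.HasAntidiagonal.mem_antidiagonal.1 hx, ← gaussV_terms_add]
  exact add_le_add (gaussV_le h₁ x.1) (gaussV_le h₂ x.2)

/-- Gauss's lemma: the coefficient of `x^(i₀ + j₀)` in `h₁ * h₂`, for `i₀`, `j₀` the least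
indices at which `gaussV` of `h₁`, `h₂` is attained, is dominated by the single product
`h₁.coeff i₀ * h₂.coeff j₀`. -/
theorem gaussV_mul_le (h₁ h₂ : R[X]) :
    gaussV u d (h₁ * h₂) ≤ gaussV u d h₁ + gaussV u d h₂ := by
  classical
  obtain ⟨i₀, hi₀, hlt₁⟩ := exists_least_index_gaussV_eq (u := u) (d := d) h₁
  obtain ⟨j₀, hj₀, hlt₂⟩ := exists_least_index_gaussV_eq (u := u) (d := d) h₂
  by_cases htop : gaussV u d h₁ + gaussV u d h₂ = ⊤
  · rw [htop]; exact le_top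
  obtain ⟨htop₁, htop₂⟩ := WithTop.add_ne_top.1 htop
  have hmain : u.v (h₁.coeff i₀ * h₂.coeff j₀) + (((i₀ + j₀) • d : Γ) : WithTop Γ)
      = gaussV u d h₁ + gaussV u d h₂ := by rw [← gaussV_terms_add, hi₀, hj₀]
  have hfin : u.v (h₁.coeff i₀ * h₂.coeff j₀) ≠ ⊤ := fun h => htop (by rw [← hmain, h, top_add])
  have hdom : ∀ x ∈ (Finset.HasAntidiagonal.antidiagonal (i₀ + j₀)).erase (i₀, j₀),
      u.v (h₁.coeff i₀ * h₂.coeff j₀) < u.v (h₁.coeff x.1 * h₂.coeff x.2) := by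
    intro x hx
    obtain ⟨hne, hx⟩ := Finset.mem_erase.1 hx
    have hsum := Finset.HasAntidiagonal.mem_antidiagonal.1 hx
    refine (WithTop.add_lt_add_iff_right (z := (((i₀ + j₀) • d : Γ) : WithTop Γ))
      WithTop.coe_ne_top).1 ?_
    rw [hmain, ← hsum, ← gaussV_terms_add]
    rcases Nat.lt_or_ge x.1 i₀ with h | h
    · exact lt_of_lt_of_le (WithTop.add_lt_add_right htop₂ (hlt₁ _ h))
        (add_le_add le_rfl (gaussV_le h₂ _))
    · have : x.2 < j₀ := by
        by_contra! h'
        exact hne (Prod.ext (by omega) (by omega))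
      exact lt_of_lt_of_le (WithTop.add_lt_add_left htop₁ (hlt₂ _ this))
        (add_le_add (gaussV_le h₁ _) le_rfl)
  have hcoeff : u.v ((h₁ * h₂).coeff (i₀ + j₀)) = u.v (h₁.coeff i₀ * h₂.coeff j₀) := by
    have hmem : (i₀, j₀) ∈ Finset.HasAntidiagonal.antidiagonal (i₀ + j₀) :=
      Finset.HasAntidiagonal.mem_antidiagonal.2 rfl
    rw [Polynomial.coeff_mul, ← Finset.add_sum_erase _ _ hmem]
    exact u.v_add_eq_of_lt (u.lt_v_sum hfin _ _ hdom)
  calc gaussV u d (h₁ * h₂)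
      ≤ u.v ((h₁ * h₂).coeff (i₀ + j₀)) + (((i₀ + j₀) • d : Γ) : WithTop Γ) := gaussV_le _ _
    _ = gaussV u d h₁ + gaussV u d h₂ := by rw [hcoeff, hmain]

variable (u d)

noncomputable def gauss : ValOn R[X] Γ where
  v := gaussV u d
  v_zero := by simp [gaussV]
  v_one := le_antisymm (by simpa [u.v_one] using gaussV_le (u := u) (d := d) 1 0)
    (le_gaussV_iff.2 fun j => by
      rcases j with _ | j
      · simp [u.v_one]
      · simp [Polynomial.coeff_one, u.v_zero])
  v_mul h₁ h₂ := le_antisymm (gaussV_mul_le h₁ h₂) (gaussV_add_le_gaussV_mul h₁ h₂)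
  min_le_v_add h₁ h₂ := le_gaussV_iff.2 fun j => by
    rw [Polynomial.coeff_add]
    calc min (gaussV u d h₁) (gaussV u d h₂)
        ≤ min (u.v (h₁.coeff j) + ((j • d : Γ) : WithTop Γ))
            (u.v (h₂.coeff j) + ((j • d : Γ) : WithTop Γ)) :=
          min_le_min (gaussV_le h₁ j) (gaussV_le h₂ j)
      _ ≤ u.v (h₁.coeff j + h₂.coeff j) + ((j • d : Γ) : WithTop Γ) := by
          rw [min_add_add_right]; exact add_le_add (u.min_le_v_add _ _) le_rfl

end Gauss

section GaussAt

variable {R : Type*} [CommRing R] (u : ValOn R Γ) (a : R) (d : Γ)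

noncomputable def gaussAt : ValOn R[X] Γ :=
  (u.gauss d).comap (taylorAlgHom a).toRingHom

theorem gaussAt_v (h : R[X]) : (u.gaussAt a d).v h = gaussV u d (taylor a h) := rfl

theorem gaussAt_C (c : R) : (u.gaussAt a d).v (C c) = u.v c := by
  rw [gaussAt_v, taylor_C]
  refine le_antisymm ((gaussV_le (C c) 0).trans_eq (by simp)) (le_gaussV_iff.2 fun j => ?_)
  rcases j with _ | j <;> simp [Polynomial.coeff_C, u.v_zero]

theorem gaussAt_X_sub_C (b : R) :
    (u.gaussAt a d).v (X - C b) = min (u.v (a - b)) (d : WithTop Γ) := by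
  have htaylor : taylor a (X - C b) = X + C (a - b) := by
    rw [map_sub, taylor_X, taylor_C, C_sub]; ring
  rw [gaussAt_v, htaylor]
  refine le_antisymm (le_min ?_ ?_) (le_gaussV_iff.2 fun j => ?_)
  · exact (gaussV_le _ 0).trans_eq (by simp)
  · exact (gaussV_le _ 1).trans_eq (by simp [u.v_one])
  · rcases j with _ | _ | j
    · simp
    · simp [u.v_one]
    · simp [Polynomial.coeff_X, u.v_zero]

theorem gaussAt_le_eval (h : R[X]) : (u.gaussAt a d).v h ≤ u.v (h.eval a) :=
  (gaussV_le _ 0).trans_eq (by simp [taylor_coeff_zero])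

theorem gaussAt_add_eq_min {r s : R[X]} (hs : s.eval a = 0)
    (hr : (u.gaussAt a d).v r = u.v (r.eval a)) :
    (u.gaussAt a d).v (r + s) = min ((u.gaussAt a d).v r) ((u.gaussAt a d).v s) := by
  refine le_antisymm ?_ ((u.gaussAt a d).min_le_v_add r s)
  rcases lt_or_ge ((u.gaussAt a d).v s) ((u.gaussAt a d).v r) with hlt | hle
  · rw [add_comm, (u.gaussAt a d).v_add_eq_of_lt hlt, min_eq_right hlt.le]
  · rw [min_eq_left hle, hr]
    simpa [hs] using u.gaussAt_le_eval a d (r + s)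

end GaussAt

section AlgClosed

variable {F : Type*} [Field F] [IsAlgClosed F]

theorem v_eq_add_sum_roots (μ : ValOn F[X] Γ) (h : F[X]) :
    μ.v h = μ.v (C h.leadingCoeff) + (h.roots.map fun b => μ.v (X - C b)).sum := by
  conv_lhs =>
    rw [← C_leadingCoeff_mul_prod_multiset_X_sub_C (p := h) IsAlgClosed.card_roots_eq_natDegree]
  rw [μ.v_mul, μ.v_multiset_prod, Multiset.map_map]
  rfl

theorem v_eval_eq_add_sum_roots (u : ValOn F Γ) (h : F[X]) (a : F) :
    u.v (h.eval a) = u.v h.leadingCoeff + (h.roots.map fun b => u.v (a - b)).sum := by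
  simpa using (u.comap (evalRingHom a)).v_eq_add_sum_roots h

end AlgClosed

section RootTrunc

variable {F : Type*} [Field F] (w : ValOn F[X] Γ)

/-- `w` with the value `w (X - C b)` at every root `b` capped at `d`; by `gaussAt_eq_rootTrunc`
it is the Gauss valuation centred at any `a` with `w (X - C a) = d`. -/
noncomputable def rootTrunc (d : Γ) (h : F[X]) : WithTop Γ :=
  w.v (C h.leadingCoeff) + (h.roots.map fun b => min (w.v (X - C b)) (d : WithTop Γ)).sum

theorem rootTrunc_of_roots_eq_cons (d : Γ) {h : F[X]} {b : F} {t : Multiset F}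
    (ht : h.roots = b ::ₘ t) :
    w.rootTrunc d h = w.v (C h.leadingCoeff) + (min (w.v (X - C b)) (d : WithTop Γ) +
      (t.map fun c => min (w.v (X - C c)) (d : WithTop Γ)).sum) := by
  rw [rootTrunc, ht, Multiset.map_cons, Multiset.sum_cons]

theorem rootTrunc_mono {d d' : Γ} (hdd : d ≤ d') (h : F[X]) :
    w.rootTrunc d h ≤ w.rootTrunc d' h :=
  add_le_add le_rfl (Multiset.sum_map_le_sum_map _ _ fun _ _ =>
    min_le_min le_rfl (WithTop.coe_le_coe.2 hdd))

variable [IsAlgClosed F]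

theorem gaussAt_eq_rootTrunc {a : F} {d : Γ} (ha : w.v (X - C a) = d) (h : F[X]) :
    ((w.comap C).gaussAt a d).v h = w.rootTrunc d h := by
  rw [v_eq_add_sum_roots, gaussAt_C, comap_v, rootTrunc]
  congr 2
  refine Multiset.map_congr rfl fun b _ => ?_
  rw [gaussAt_X_sub_C, comap_v, ← ha, C_sub,
    ← w.min_v_sub_eq (X - C b) (X - C a), sub_sub_sub_cancel_left]

theorem rootTrunc_eq_v {d : Γ} {h : F[X]} (H : ∀ b ∈ h.roots, w.v (X - C b) ≤ d) :
    w.rootTrunc d h = w.v h := by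
  rw [rootTrunc, w.v_eq_add_sum_roots h]
  congr 2
  exact Multiset.map_congr rfl fun b hb => min_eq_left (H b hb)

theorem rootTrunc_le_v (d : Γ) (h : F[X]) : w.rootTrunc d h ≤ w.v h := by
  rw [rootTrunc, w.v_eq_add_sum_roots h]
  exact add_le_add le_rfl (Multiset.sum_map_le_sum_map _ _ fun _ _ => min_le_left _ _)

theorem rootTrunc_lt_rootTrunc {d d' : Γ} (hdd : d < d') {h : F[X]}
    (hlt : w.rootTrunc d' h < w.v h) : w.rootTrunc d h < w.rootTrunc d' h := by
  obtain ⟨b, hb, hbig⟩ : ∃ b ∈ h.roots, (d' : WithTop Γ) < w.v (X - C b) := by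
    by_contra! H
    exact hlt.ne (w.rootTrunc_eq_v H)
  have hdd' : (d : WithTop Γ) < d' := WithTop.coe_lt_coe.2 hdd
  have hfin : w.rootTrunc d h ≠ ⊤ := ((w.rootTrunc_mono hdd.le h).trans_lt hlt).ne_top
  obtain ⟨t, ht⟩ := Multiset.exists_cons_of_mem hb
  rw [w.rootTrunc_of_roots_eq_cons d ht] at hfin ⊢
  rw [w.rootTrunc_of_roots_eq_cons d' ht, min_eq_right (hdd'.trans hbig).le,
    min_eq_right hbig.le]
  obtain ⟨hlc, hrest⟩ := WithTop.add_ne_top.1 hfin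
  refine WithTop.add_lt_add_left hlc ?_
  exact (WithTop.add_lt_add_right (WithTop.add_ne_top.1 hrest).2 hdd').trans_le
    (add_le_add le_rfl (Multiset.sum_map_le_sum_map _ _ fun _ _ =>
      min_le_min le_rfl (WithTop.coe_le_coe.2 hdd.le)))

end RootTrunc

end ValOn

theorem Finset.inf'_range_add_two {α : Type*} [LinearOrder α] (F : ℕ → α) (r : ℕ) :
    (Finset.range (r + 2)).inf' Finset.nonempty_range_add_one F =
      min (F 0) ((Finset.range (r + 1)).inf' Finset.nonempty_range_add_one fun j => F (j + 1)) := by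
  refine le_antisymm (le_min (Finset.inf'_le _ (by simp))
    (Finset.le_inf' _ _ fun j hj => Finset.inf'_le _ (by simpa using hj)))
    (Finset.le_inf' _ _ fun j hj => ?_)
  rcases j with _ | j
  · exact min_le_left _ _
  · exact (min_le_right _ _).trans (Finset.inf'_le _ (by simpa using hj))

namespace Polynomial

variable {R : Type*} [CommRing R] {q s : R[X]}

theorem divByMonic_mul_eq (hq : q.Monic) (hs : s.Monic) (p : R[X]) :
    p /ₘ (q * s) = p /ₘ q /ₘ s := by
  nontriviality R
  refine (div_modByMonic_unique (p /ₘ q /ₘ s) (q * ((p /ₘ q) %ₘ s) + p %ₘ q)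
    (hq.mul hs) ⟨?_, ?_⟩).1
  · conv_rhs => rw [← modByMonic_add_div p q, ← modByMonic_add_div (p /ₘ q) s]
    ring
  · rw [hs.degree_mul]
    refine (degree_add_le _ _).trans_lt (max_lt ?_ ?_)
    · rw [hq.degree_mul_comm, hq.degree_mul, add_comm]
      exact WithBot.add_lt_add_left (by simp [degree_eq_bot, hq.ne_zero])
        (degree_modByMonic_lt _ hs)
    · exact (degree_modByMonic_lt _ hq).trans_le
        (le_add_of_nonneg_right (zero_le_degree_iff.2 hs.ne_zero))

theorem modByMonic_divByMonic_pow_eq_zero (hq : q.Monic) {p : R[X]} {j : ℕ} (hj : p.natDegree < j) :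
    (p /ₘ q ^ j) %ₘ q = 0 := by
  nontriviality R
  rcases Nat.eq_zero_or_pos q.natDegree with h0 | hpos
  · rw [hq.natDegree_eq_zero.1 h0, modByMonic_one]
  rw [(divByMonic_eq_zero_iff (hq.pow j)).2, zero_modByMonic]
  refine degree_le_natDegree.trans_lt ?_
  rw [degree_eq_natDegree (hq.pow j).ne_zero, hq.natDegree_pow]
  exact_mod_cast hj.trans_le (Nat.le_mul_of_pos_right j hpos)

end Polynomial

section TruncVal

variable {K : Type*} [Field K] {Γ : Type*} [AddCommGroup Γ] [LinearOrder Γ]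
  [IsOrderedAddMonoid Γ] (w : ValOn K[X] Γ) {q : K[X]}

theorem le_truncVal_iff (hq : q.Monic) {f : K[X]} {γ : WithTop Γ} :
    γ ≤ truncVal w q f ↔ ∀ j, γ ≤ w.v ((f /ₘ q ^ j) %ₘ q * q ^ j) := by
  refine (Finset.le_inf'_iff _ _).trans ⟨fun H j => ?_, fun H j _ => H j⟩
  rcases Nat.lt_or_ge f.natDegree j with hj | hj
  · simp [modByMonic_divByMonic_pow_eq_zero hq hj, w.v_zero]
  · exact H j (Finset.mem_range.2 (Nat.lt_succ_of_le hj))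

theorem exists_truncVal_eq (q f : K[X]) :
    ∃ j, truncVal w q f = w.v ((f /ₘ q ^ j) %ₘ q * q ^ j) := by
  obtain ⟨j, -, hj⟩ := Finset.exists_mem_eq_inf' Finset.nonempty_range_add_one
    fun j => w.v ((f /ₘ q ^ j) %ₘ q * q ^ j)
  exact ⟨j, hj⟩

theorem truncVal_eq_min (hq : q.Monic) (f : K[X]) :
    truncVal w q f = min (w.v (f %ₘ q)) (w.v q + truncVal w q (f /ₘ q)) := by
  have hshift : ∀ j, w.v ((f /ₘ q ^ (j + 1)) %ₘ q * q ^ (j + 1))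
      = w.v q + w.v ((f /ₘ q /ₘ q ^ j) %ₘ q * q ^ j) := by
    intro j
    rw [pow_succ', divByMonic_mul_eq hq (hq.pow j), mul_left_comm, w.v_mul]
  refine le_antisymm (le_min ?_ ?_) ((le_truncVal_iff w hq).2 fun j => ?_)
  · simpa using (le_truncVal_iff w hq).1 le_rfl 0
  · obtain ⟨j, hj⟩ := exists_truncVal_eq w q (f /ₘ q)
    rw [hj, ← hshift]
    exact (le_truncVal_iff w hq).1 le_rfl (j + 1)
  · rcases j with _ | j
    · simp
    · rw [hshift]
      exact (min_le_right _ _).trans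
        (add_le_add le_rfl ((le_truncVal_iff w hq).1 le_rfl j))

theorem truncVal_zero (q : K[X]) : truncVal w q 0 = ⊤ := by
  simp [truncVal, w.v_zero]

theorem truncVal_of_degree_lt (hq : q.Monic) {f : K[X]} (hf : f.degree < q.degree) :
    truncVal w q f = w.v f := by
  rw [truncVal_eq_min w hq, (modByMonic_eq_self_iff hq).2 hf,
    (divByMonic_eq_zero_iff hq).2 hf, truncVal_zero, add_top, min_top_right]

theorem truncVal_sum_mul_pow (hq : q.Monic) (r : ℕ) {c : ℕ → K[X]}
    (hc : ∀ j, (c j).degree < q.degree) :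
    truncVal w q (∑ j ∈ Finset.range (r + 1), c j * q ^ j)
      = (Finset.range (r + 1)).inf' Finset.nonempty_range_add_one fun j => w.v (c j * q ^ j) := by
  induction r generalizing c with
  | zero => simp [truncVal_of_degree_lt w hq (hc 0)]
  | succ r ih =>
    have hsum : ∑ j ∈ Finset.range (r + 2), c j * q ^ j
        = c 0 + q * ∑ j ∈ Finset.range (r + 1), c (j + 1) * q ^ j := by
      rw [Finset.sum_range_succ', Finset.mul_sum, add_comm]
      simp only [pow_succ', pow_zero, mul_one, mul_left_comm]
    obtain ⟨hdiv, hmod⟩ := div_modByMonic_unique _ _ hq ⟨hsum.symm, hc 0⟩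
    rw [truncVal_eq_min w hq, hdiv, hmod, ih fun j => hc (j + 1), Finset.inf'_range_add_two,
      pow_zero, mul_one]
    congr 1
    refine (map_finset_inf' (OrderHom.mk (w.v q + ·) fun _ _ h => add_le_add le_rfl h) _ _).trans
      (Finset.inf'_congr _ rfl fun j _ => ?_)
    simp only [Function.comp_apply, pow_succ', mul_left_comm, w.v_mul]
    rfl

theorem truncVal_of_natDegree_eq (hq : q.Monic) (hq0 : 0 < q.natDegree) {q' : K[X]}
    (hq' : q'.Monic) (hdeg : q'.natDegree = q.natDegree) :
    truncVal w q q' = min (w.v (q' - q)) (w.v q) := by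
  have hdeg' : q'.degree = q.degree := by
    rw [degree_eq_natDegree hq'.ne_zero, degree_eq_natDegree hq.ne_zero, hdeg]
  have hsub : (q' - q).degree < q.degree :=
    hdeg' ▸ degree_sub_lt_left hdeg' hq'.ne_zero (by rw [hq.leadingCoeff, hq'.leadingCoeff])
  obtain ⟨hdiv, hmod⟩ := div_modByMonic_unique 1 (q' - q) hq ⟨by ring, hsub⟩
  have hone : (1 : K[X]).degree < q.degree := by
    rw [degree_one, degree_eq_natDegree hq.ne_zero]; exact_mod_cast hq0
  rw [truncVal_eq_min w hq, hdiv, hmod, truncVal_of_degree_lt w hq hone, w.v_one, add_zero]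

end TruncVal

section KeyPolynomial

variable {K : Type*} [Field K] {Γ : Type*} [AddCommGroup Γ] [LinearOrder Γ]
  [IsOrderedAddMonoid Γ] {w : ValOn K[X] Γ} {wbar : ValOn (AlgebraicClosure K)[X] Γ}
  {Q : K[X]} {a : AlgebraicClosure K} {d : Γ}

local notation "K̄" => AlgebraicClosure K

theorem v_X_sub_C_le_delta {f : K[X]} {b : K̄} (hb : b ∈ (f.map (algebraMap K K̄)).roots) :
    ((wbar.v (X - C b) : WithTop Γ) : WithBot (WithTop Γ)) ≤ delta wbar f :=
  Multiset.le_sup (Multiset.mem_map_of_mem _ hb)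

theorem exists_mem_roots_delta_eq (hQ0 : 0 < Q.natDegree) :
    ∃ a ∈ (Q.map (algebraMap K K̄)).roots, delta wbar Q = wbar.v (X - C a) := by
  have hroots : (Q.map (algebraMap K K̄)).roots ≠ 0 := by
    rw [← Multiset.card_pos, IsAlgClosed.card_roots_eq_natDegree,
      natDegree_map_eq_of_injective (algebraMap K K̄).injective]
    exact hQ0
  obtain ⟨a, ha, hmax⟩ := Multiset.exists_max_image (fun b => wbar.v (X - C b)) hroots
  refine ⟨a, ha, le_antisymm (Multiset.sup_le.2 fun x hx => ?_) (v_X_sub_C_le_delta ha)⟩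
  obtain ⟨b, hb, rfl⟩ := Multiset.mem_map.1 hx
  exact WithBot.coe_le_coe.2 (hmax b hb)

theorem IsKeyPoly.delta_lt (hQ : IsKeyPoly wbar Q) {f : K[X]} (hf : f ≠ 0)
    (hdeg : f.degree < Q.degree) : delta wbar f < delta wbar Q :=
  lt_of_not_ge fun hle => (hQ.2 f hf hle).not_gt hdeg

theorem v_X_sub_C_le_of_mem_roots (hd : delta wbar Q = ((d : WithTop Γ) : WithBot (WithTop Γ)))
    {b : K̄} (hb : b ∈ (Q.map (algebraMap K K̄)).roots) :
    wbar.v (X - C b) ≤ d :=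
  WithBot.coe_le_coe.1 (hd ▸ v_X_sub_C_le_delta hb)

theorem IsKeyPoly.v_X_sub_C_lt (hQ : IsKeyPoly wbar Q)
    (hd : delta wbar Q = ((d : WithTop Γ) : WithBot (WithTop Γ))) {g : K[X]}
    (hdeg : g.degree < Q.degree)
    {b : K̄} (hb : b ∈ (g.map (algebraMap K K̄)).roots) : wbar.v (X - C b) < d := by
  have hg : g ≠ 0 := by rintro rfl; simp at hb
  exact WithBot.coe_lt_coe.1 (hd ▸ (v_X_sub_C_le_delta hb).trans_lt (hQ.delta_lt hg hdeg))

theorem rootTrunc_map_self (hbar : ∀ f : K[X], wbar.v (f.map (algebraMap K K̄)) = w.v f)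
    (hd : delta wbar Q = ((d : WithTop Γ) : WithBot (WithTop Γ))) :
    wbar.rootTrunc d (Q.map (algebraMap K K̄)) = w.v Q := by
  rw [wbar.rootTrunc_eq_v fun b hb => v_X_sub_C_le_of_mem_roots hd hb, hbar]

theorem IsKeyPoly.rootTrunc_map_of_degree_lt
    (hbar : ∀ f : K[X], wbar.v (f.map (algebraMap K K̄)) = w.v f) (hQ : IsKeyPoly wbar Q)
    (hd : delta wbar Q = ((d : WithTop Γ) : WithBot (WithTop Γ))) {g : K[X]}
    (hdeg : g.degree < Q.degree) : wbar.rootTrunc d (g.map (algebraMap K K̄)) = w.v g := by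
  rw [wbar.rootTrunc_eq_v fun b hb => (hQ.v_X_sub_C_lt hd hdeg hb).le, hbar]

theorem IsKeyPoly.v_C_eval_of_degree_lt
    (hbar : ∀ f : K[X], wbar.v (f.map (algebraMap K K̄)) = w.v f) (hQ : IsKeyPoly wbar Q)
    (hd : delta wbar Q = ((d : WithTop Γ) : WithBot (WithTop Γ))) (ha : wbar.v (X - C a) = d)
    {g : K[X]} (hdeg : g.degree < Q.degree) :
    wbar.v (C ((g.map (algebraMap K K̄)).eval a)) = w.v g := by
  have heval := (wbar.comap C).v_eval_eq_add_sum_roots (g.map (algebraMap K K̄)) a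
  simp only [ValOn.comap_v] at heval
  rw [heval, ← hbar, wbar.v_eq_add_sum_roots (g.map (algebraMap K K̄))]
  congr 2
  refine Multiset.map_congr rfl fun b hb => ?_
  rw [C_sub, ← sub_sub_sub_cancel_left _ _ X]
  exact wbar.v_sub_eq_of_lt (ha ▸ hQ.v_X_sub_C_lt hd hdeg hb)

/-- Expanding `f = f %ₘ Q + Q * (f /ₘ Q)`, the truncation satisfies the same recursion as the
Gauss valuation centred at a root `a` of `Q` with `ν̄ (X - a) = δ Q`: the first summand has its
value read off at `a`, where the second one vanishes. -/
theorem IsKeyPoly.truncVal_eq_rootTrunc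
    (hbar : ∀ f : K[X], wbar.v (f.map (algebraMap K K̄)) = w.v f) (hQ : IsKeyPoly wbar Q)
    (hd : delta wbar Q = ((d : WithTop Γ) : WithBot (WithTop Γ)))
    (ha : a ∈ (Q.map (algebraMap K K̄)).roots) (had : wbar.v (X - C a) = d) (f : K[X]) :
    truncVal w Q f = wbar.rootTrunc d (f.map (algebraMap K K̄)) := by
  set μ := (wbar.comap C).gaussAt a d
  have hμ : ∀ h, μ.v h = wbar.rootTrunc d h := wbar.gaussAt_eq_rootTrunc had
  rw [← hμ]
  induction hN : f.natDegree using Nat.strong_induction_on generalizing f with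
  | _ N ih =>
  rcases lt_or_ge f.degree Q.degree with hlt | hge
  · rw [truncVal_of_degree_lt w hQ.1 hlt, hμ, hQ.rootTrunc_map_of_degree_lt hbar hd hlt]
  have hr := degree_modByMonic_lt f hQ.1
  have hQ0 : 0 < Q.natDegree := by
    by_contra! h
    rw [hQ.1.natDegree_eq_zero.1 (Nat.le_zero.1 h), Polynomial.map_one, roots_one] at ha
    simp at ha
  have hg : (f /ₘ Q).natDegree < N := by
    have := natDegree_le_natDegree hge
    rw [natDegree_divByMonic f hQ.1]
    omega
  have hsplit : f.map (algebraMap K K̄) = (f %ₘ Q).map (algebraMap K K̄)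
      + Q.map (algebraMap K K̄) * (f /ₘ Q).map (algebraMap K K̄) := by
    rw [← Polynomial.map_mul, ← Polynomial.map_add, modByMonic_add_div]
  have hvanish : (Q.map (algebraMap K K̄) * (f /ₘ Q).map (algebraMap K K̄)).eval a = 0 := by
    rw [eval_mul, (isRoot_of_mem_roots ha).eq_zero, zero_mul]
  have hrem : μ.v ((f %ₘ Q).map (algebraMap K K̄))
      = (wbar.comap C).v (((f %ₘ Q).map (algebraMap K K̄)).eval a) := by
    rw [hμ, hQ.rootTrunc_map_of_degree_lt hbar hd hr, ValOn.comap_v,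
      hQ.v_C_eval_of_degree_lt hbar hd had hr]
  rw [truncVal_eq_min w hQ.1, ih _ hg _ rfl, hsplit, ValOn.gaussAt_add_eq_min _ _ _ hvanish hrem,
    μ.v_mul, hμ, hμ, hμ, rootTrunc_map_self hbar hd, hQ.rootTrunc_map_of_degree_lt hbar hd hr]

theorem IsKeyPoly.exists_truncVal_eq_rootTrunc
    (hbar : ∀ f : K[X], wbar.v (f.map (algebraMap K K̄)) = w.v f) (hQ : IsKeyPoly wbar Q)
    (hQ0 : 0 < Q.natDegree) (htop : w.v Q ≠ ⊤) :
    ∃ d : Γ, ∀ f, truncVal w Q f = wbar.rootTrunc d (f.map (algebraMap K K̄)) := by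
  obtain ⟨a, ha, hda⟩ := exists_mem_roots_delta_eq (wbar := wbar) hQ0
  have hfin : wbar.v (X - C a) ≠ ⊤ := fun htop' => htop <| by
    rw [← hbar, ← mul_divByMonic_eq_iff_isRoot.2 (isRoot_of_mem_roots ha), wbar.v_mul, htop',
      top_add]
  obtain ⟨d, hd⟩ := WithTop.ne_top_iff_exists.1 hfin
  exact ⟨d, hQ.truncVal_eq_rootTrunc hbar (by rw [hda, ← hd]) ha hd.symm⟩

end KeyPolynomial

section Psi

variable {K : Type*} [Field K] {Γ : Type*} [AddCommGroup Γ] [LinearOrder Γ]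
  [IsOrderedAddMonoid Γ] {w : ValOn K[X] Γ} {wbar : ValOn (AlgebraicClosure K)[X] Γ}
  {n : ℕ} {Q Q' Qn : K[X]}

local notation "K̄" => AlgebraicClosure K

def TruncLevels (w : ValOn K[X] Γ) (wbar : ValOn K̄[X] Γ) (n : ℕ) (d : K[X] → Γ) : Prop :=
  ∀ Q ∈ Psi wbar n, ∀ f, truncVal w Q f = wbar.rootTrunc (d Q) (f.map (algebraMap K K̄))

theorem pos_of_mem_psi (hnomax : ∀ Q ∈ Psi wbar n, ∃ Q' ∈ Psi wbar n, w.v Q < w.v Q')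
    (hQ : Q ∈ Psi wbar n) : 0 < n := by
  obtain ⟨Q', hQ', hlt⟩ := hnomax Q hQ
  by_contra! hn
  have hone : ∀ P ∈ Psi wbar n, P = 1 := fun P hP =>
    hP.1.1.natDegree_eq_zero.1 (hP.2.trans (Nat.le_zero.1 hn))
  rw [hone Q hQ, hone Q' hQ'] at hlt
  exact lt_irrefl _ hlt

theorem exists_truncLevels (hbar : ∀ f : K[X], wbar.v (f.map (algebraMap K K̄)) = w.v f)
    (hnomax : ∀ Q ∈ Psi wbar n, ∃ Q' ∈ Psi wbar n, w.v Q < w.v Q') :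
    ∃ d, TruncLevels w wbar n d := by
  have H : ∀ Q ∈ Psi wbar n,
      ∃ d : Γ, ∀ f, truncVal w Q f = wbar.rootTrunc d (f.map (algebraMap K K̄)) := by
    intro Q hQ
    obtain ⟨Q', -, hlt⟩ := hnomax Q hQ
    exact hQ.1.exists_truncVal_eq_rootTrunc hbar (hQ.2 ▸ pos_of_mem_psi hnomax hQ) hlt.ne_top
  choose! d hd using H
  exact ⟨d, hd⟩

variable {d : K[X] → Γ}

theorem truncVal_mono_of_level_le (hd : TruncLevels w wbar n d) (hQ : Q ∈ Psi wbar n)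
    (hQ' : Q' ∈ Psi wbar n) (hdd : d Q ≤ d Q') (f : K[X]) : truncVal w Q f ≤ truncVal w Q' f := by
  rw [hd Q hQ, hd Q' hQ']
  exact wbar.rootTrunc_mono hdd _

theorem truncVal_le_v (hbar : ∀ f : K[X], wbar.v (f.map (algebraMap K K̄)) = w.v f)
    (hd : TruncLevels w wbar n d) (hQ : Q ∈ Psi wbar n) (f : K[X]) : truncVal w Q f ≤ w.v f := by
  rw [hd Q hQ, ← hbar]
  exact wbar.rootTrunc_le_v _ _

theorem truncVal_lt_truncVal_of_level_lt
    (hbar : ∀ f : K[X], wbar.v (f.map (algebraMap K K̄)) = w.v f) (hd : TruncLevels w wbar n d)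
    (hQ : Q ∈ Psi wbar n) (hQ' : Q' ∈ Psi wbar n) (hdd : d Q < d Q') {g : K[X]}
    (hg : truncVal w Q' g < w.v g) : truncVal w Q g < truncVal w Q' g := by
  rw [hd Q' hQ', ← hbar] at hg
  rw [hd Q hQ, hd Q' hQ']
  exact wbar.rootTrunc_lt_rootTrunc hdd hg

theorem truncVal_lt_truncVal_self (hn : 0 < n) (hQ : Q ∈ Psi wbar n) (hQ' : Q' ∈ Psi wbar n)
    (hlt : w.v Q < w.v Q') : truncVal w Q Q' < truncVal w Q' Q' := by
  have hQ0 : 0 < Q.natDegree := hQ.2 ▸ hn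
  rw [truncVal_of_natDegree_eq w hQ.1.1 hQ0 hQ'.1.1 (hQ'.2.trans hQ.2.symm),
    truncVal_of_natDegree_eq w hQ'.1.1 (hQ'.2 ▸ hn) hQ'.1.1 rfl, sub_self, w.v_zero,
    min_top_left]
  exact (min_le_right _ _).trans_lt hlt

theorem level_lt_of_v_lt (hd : TruncLevels w wbar n d) (hn : 0 < n) (hQ : Q ∈ Psi wbar n)
    (hQ' : Q' ∈ Psi wbar n) (hlt : w.v Q < w.v Q') : d Q < d Q' :=
  lt_of_not_ge fun hle => (truncVal_lt_truncVal_self hn hQ hQ' hlt).not_ge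
    (truncVal_mono_of_level_le hd hQ' hQ hle Q')

theorem IsLimitKeyPoly.exists_truncVal_eq_of_degree_lt
    (hbar : ∀ f : K[X], wbar.v (f.map (algebraMap K K̄)) = w.v f) (hd : TruncLevels w wbar n d)
    (hQn : IsLimitKeyPoly w wbar n Qn) {g : K[X]} (hg : g.degree < Qn.degree) :
    ∃ Q ∈ Psi wbar n, ∀ Q' ∈ Psi wbar n,
      (∀ h, truncVal w Q h ≤ truncVal w Q' h) → truncVal w Q' g = w.v g := by
  obtain ⟨Q, hQ, hle⟩ : ∃ Q ∈ Psi wbar n, w.v g ≤ truncVal w Q g := by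
    by_contra! H
    exact (hQn.2.2 g H).not_gt hg
  exact ⟨Q, hQ, fun Q' hQ' hQQ' => (truncVal_le_v hbar hd hQ' g).antisymm (hle.trans (hQQ' g))⟩

theorem psi_truncVal_total (hd : TruncLevels w wbar n d) (hQ : Q ∈ Psi wbar n)
    (hQ' : Q' ∈ Psi wbar n) :
    (∀ f, truncVal w Q f ≤ truncVal w Q' f) ∨ (∀ f, truncVal w Q' f ≤ truncVal w Q f) :=
  (le_total (d Q) (d Q')).imp (truncVal_mono_of_level_le hd hQ hQ')
    (truncVal_mono_of_level_le hd hQ' hQ)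

theorem psi_truncVal_no_max (hd : TruncLevels w wbar n d)
    (hnomax : ∀ Q ∈ Psi wbar n, ∃ Q' ∈ Psi wbar n, w.v Q < w.v Q') (hQ : Q ∈ Psi wbar n) :
    ∃ Q' ∈ Psi wbar n, (∀ f, truncVal w Q f ≤ truncVal w Q' f) ∧
      ∃ g, truncVal w Q g < truncVal w Q' g := by
  obtain ⟨Q', hQ', hlt⟩ := hnomax Q hQ
  have hn := pos_of_mem_psi hnomax hQ
  exact ⟨Q', hQ', truncVal_mono_of_level_le hd hQ hQ' (level_lt_of_v_lt hd hn hQ hQ' hlt).le,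
    Q', truncVal_lt_truncVal_self hn hQ hQ' hlt⟩

theorem IsLimitKeyPoly.not_psiStable
    (hbar : ∀ f : K[X], wbar.v (f.map (algebraMap K K̄)) = w.v f) (hd : TruncLevels w wbar n d)
    (hnomax : ∀ Q ∈ Psi wbar n, ∃ Q' ∈ Psi wbar n, w.v Q < w.v Q')
    (hQn : IsLimitKeyPoly w wbar n Qn) : ¬ PsiStable w wbar n Qn := by
  rintro ⟨Q, hQ, hstable⟩
  obtain ⟨Q', hQ', hlt⟩ := hnomax Q hQ
  have hdd := level_lt_of_v_lt hd (pos_of_mem_psi hnomax hQ) hQ hQ' hlt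
  have hstrict := truncVal_lt_truncVal_of_level_lt hbar hd hQ hQ' hdd (hQn.2.1 Q' hQ')
  exact hstrict.ne (hstable Q' hQ' (truncVal_mono_of_level_le hd hQ hQ' hdd.le)).symm

theorem IsLimitKeyPoly.degree_le_of_not_psiStable
    (hbar : ∀ f : K[X], wbar.v (f.map (algebraMap K K̄)) = w.v f) (hd : TruncLevels w wbar n d)
    (hQn : IsLimitKeyPoly w wbar n Qn) {g : K[X]} (hg : ¬ PsiStable w wbar n g) :
    Qn.degree ≤ g.degree := by
  by_contra! hlt
  obtain ⟨Q, hQ, hstable⟩ := hQn.exists_truncVal_eq_of_degree_lt hbar hd hlt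
  exact hg ⟨Q, hQ, fun Q' hQ' hle => (hstable Q' hQ' hle).trans (hstable Q hQ fun _ => le_rfl).symm⟩

/-- The finitely many digits `c j` all stabilise beyond the `Q₀ ∈ Ψ n` of largest level among
the points where each of them does. -/
theorem IsLimitKeyPoly.truncVal_expansion
    (hbar : ∀ f : K[X], wbar.v (f.map (algebraMap K K̄)) = w.v f) (hd : TruncLevels w wbar n d)
    (hQn : IsLimitKeyPoly w wbar n Qn) (r : ℕ) {c : ℕ → K[X]}
    (hc : ∀ j, (c j).degree < Qn.degree) :
    ∃ Q₀ ∈ Psi wbar n, ∀ Q ∈ Psi wbar n, (∀ h, truncVal w Q₀ h ≤ truncVal w Q h) →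
      truncVal w Qn (∑ j ∈ Finset.range (r + 1), c j * Qn ^ j)
        = (Finset.range (r + 1)).inf' Finset.nonempty_range_add_one
          (fun j => truncVal w Q (c j) + j • w.v Qn) := by
  classical
  choose! sel hsel hstable using fun j => hQn.exists_truncVal_eq_of_degree_lt hbar hd (hc j)
  obtain ⟨Q₀, hQ₀, hmax⟩ := ((Finset.range (r + 1)).image sel).exists_max_image d
    (Finset.nonempty_range_add_one.image sel)
  obtain ⟨j₀, -, rfl⟩ := Finset.mem_image.1 hQ₀
  refine ⟨sel j₀, hsel j₀, fun Q hQ hle => ?_⟩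
  rw [truncVal_sum_mul_pow w hQn.1 r hc]
  refine Finset.inf'_congr _ rfl fun j hj => ?_
  rw [w.v_mul, w.v_pow, hstable j Q hQ fun h => (truncVal_mono_of_level_le hd (hsel j) (hsel j₀)
    (hmax _ (Finset.mem_image_of_mem sel hj)) h).trans (hle h)]

end Psi

theorem psi_totally_ordered_no_max_and_Qn_least_unstable_general
    {K : Type*} [Field K] {Γ : Type*} [AddCommGroup Γ] [LinearOrder Γ] [IsOrderedAddMonoid Γ]
    (w : ValOn (Polynomial K) Γ)
    (wbar : ValOn (Polynomial (AlgebraicClosure K)) Γ)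
    (hbar : ∀ f : Polynomial K, wbar.v (f.map (algebraMap K (AlgebraicClosure K))) = w.v f)
    (n : ℕ)
    (hnomax : ∀ Q ∈ Psi wbar n, ∃ Q' ∈ Psi wbar n, w.v Q < w.v Q')
    (Qn : Polynomial K) (hQn : IsLimitKeyPoly w wbar n Qn) :
    (∀ Q ∈ Psi wbar n, ∀ Q' ∈ Psi wbar n,
      (∀ f : Polynomial K, truncVal w Q f ≤ truncVal w Q' f) ∨
      (∀ f : Polynomial K, truncVal w Q' f ≤ truncVal w Q f)) ∧
    (∀ Q ∈ Psi wbar n, ∃ Q' ∈ Psi wbar n,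
      (∀ f : Polynomial K, truncVal w Q f ≤ truncVal w Q' f) ∧
      (∃ g : Polynomial K, truncVal w Q g < truncVal w Q' g)) ∧
    (¬ PsiStable w wbar n Qn) ∧
    (∀ g : Polynomial K, ¬ PsiStable w wbar n g → Qn.degree ≤ g.degree) ∧
    (∀ (f : Polynomial K) (r : ℕ) (c : ℕ → Polynomial K),
      f = ∑ j ∈ Finset.range (r + 1), c j * Qn ^ j →
      (∀ j : ℕ, (c j).degree < Qn.degree) →
      ∃ Q₀ ∈ Psi wbar n, ∀ Q ∈ Psi wbar n,
        (∀ h : Polynomial K, truncVal w Q₀ h ≤ truncVal w Q h) →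
        truncVal w Qn f = (Finset.range (r + 1)).inf' Finset.nonempty_range_add_one
          (fun j => truncVal w Q (c j) + j • w.v Qn)) := by
  obtain ⟨d, hd⟩ := exists_truncLevels hbar hnomax
  refine ⟨fun Q hQ Q' hQ' => psi_truncVal_total hd hQ hQ',
    fun Q hQ => psi_truncVal_no_max hd hnomax hQ,
    hQn.not_psiStable hbar hd hnomax,
    fun g hg => hQn.degree_le_of_not_psiStable hbar hd hg, ?_⟩
  rintro f r c rfl hc
  exact hQn.truncVal_expansion hbar hd r hc

/-- `𝔳 = (ν_Q)_{Q ∈ Ψ_n}` is a totally ordered subset of `V` with no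
maximal element, `Q_n` has least degree among non-`𝔳`-stable polynomials, and with
`γ = ν(Q_n)`, for each `Q_n`-expansion `f = ∑ f_j Q_n^j`, one has
`ν_{Q_n}(f) = min_j (𝔳(f_j) + jγ)` (the stable value `𝔳(f_j)` being rendered as
`ν_Q(f_j)` for all `Q ⪰` some `Q₀ ∈ Ψ_n`). -/
theorem psi_totally_ordered_no_max_and_Qn_least_unstable
    {K : Type*} [Field K] {Γ : Type*} [AddCommGroup Γ] [LinearOrder Γ] [IsOrderedAddMonoid Γ]
    (w : ValOn (Polynomial K) Γ)
    (wbar : ValOn (Polynomial (AlgebraicClosure K)) Γ)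
    (hbar : ∀ f : Polynomial K, wbar.v (f.map (algebraMap K (AlgebraicClosure K))) = w.v f)
    (n : ℕ) (hne : ∃ Q : Polynomial K, Q ∈ Psi wbar n)
    (hnomax : ∀ Q ∈ Psi wbar n, ∃ Q' ∈ Psi wbar n, w.v Q < w.v Q')
    (Qn : Polynomial K) (hQn : IsLimitKeyPoly w wbar n Qn)
    (ν₀ : ValOn K Γ) (hext : ∀ a : K, w.v (Polynomial.C a) = ν₀.v a) :
    (∀ Q ∈ Psi wbar n, ∀ Q' ∈ Psi wbar n,
      (∀ f : Polynomial K, truncVal w Q f ≤ truncVal w Q' f) ∨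
      (∀ f : Polynomial K, truncVal w Q' f ≤ truncVal w Q f)) ∧
    (∀ Q ∈ Psi wbar n, ∃ Q' ∈ Psi wbar n,
      (∀ f : Polynomial K, truncVal w Q f ≤ truncVal w Q' f) ∧
      (∃ g : Polynomial K, truncVal w Q g < truncVal w Q' g)) ∧
    (¬ PsiStable w wbar n Qn) ∧
    (∀ g : Polynomial K, ¬ PsiStable w wbar n g → Qn.degree ≤ g.degree) ∧
    (∀ (f : Polynomial K) (r : ℕ) (c : ℕ → Polynomial K),
      f = ∑ j ∈ Finset.range (r + 1), c j * Qn ^ j →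
      (∀ j : ℕ, (c j).degree < Qn.degree) →
      ∃ Q₀ ∈ Psi wbar n, ∀ Q ∈ Psi wbar n,
        (∀ h : Polynomial K, truncVal w Q₀ h ≤ truncVal w Q h) →
        truncVal w Qn f = (Finset.range (r + 1)).inf' Finset.nonempty_range_add_one
          (fun j => truncVal w Q (c j) + j • w.v Qn)) :=
  psi_totally_ordered_no_max_and_Qn_least_unstable_general w wbar hbar n hnomax Qn hQn
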